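/- arXiv:2604.25583 — 2 statements merged into one kernel-verified Lean document; each statement's English description precedes it below -/
import Mathlib

section
/- Let q̂ : ℝ^2 → ℂ be measurable, integrable, and satisfy ∫_{ℝ^2} (1+‖ξ‖^2)^2 |q̂(ξ)|^2 dξ < ∞. Define ‖q‖_{H^2} := (2π)^{-2} ( ∫_{ℝ^2} (1+‖ξ‖^2)^2 |q̂(ξ)|^2 dξ )^{1/2} and ‖q‖_{L^2} := (2π)^{-2} ( ∫_{ℝ^2} |q̂(ξ)|^2 dξ )^{1/2}. Then for every z ∈ ℝ^2 and all 0 < k_min ≤ k_max, | (2π)^{-2} ∫_{ℝ^2} q̂(ξ) e^{i⟨z,ξ⟩} dξ − (2π)^{-2} ∫_{k_min ≤ ‖ξ‖ ≤ k_max} q̂(ξ) e^{i⟨z,ξ⟩} dξ | ≤ √π ( k_max^{-1} ‖q‖_{H^2} + k_min ‖q‖_{L^2} ). -/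
/-!
The error is `(2π)⁻²` times the integral of `q̂(ξ) e^{i⟨z,ξ⟩}` over the complement of the
annulus, which is bounded by `∫ |q̂|` over the disc `‖ξ‖ < k_min` plus `∫ |q̂|` over the exterior
`‖ξ‖ > k_max`. On the disc, Cauchy–Schwarz gives `√(area) ‖q̂‖₂ = √π k_min ‖q̂‖₂`. On the exterior,
Cauchy–Schwarz against the weight `1 + ‖ξ‖²` gives `√(∫_{‖ξ‖>k_max} (1 + ‖ξ‖²)⁻²)` times the
weighted norm, and in polar coordinates that integral is `π / (1 + k_max²) ≤ π / k_max²`.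
-/

open MeasureTheory Set Metric Real Filter

lemma integral_mul_le_sqrt_mul_sqrt {α : Type*} [MeasurableSpace α] {μ : Measure α}
    {u v : α → ℝ} (hu : 0 ≤ᵐ[μ] u) (hv : 0 ≤ᵐ[μ] v) (hu2 : MemLp u 2 μ) (hv2 : MemLp v 2 μ) :
    ∫ x, u x * v x ∂μ ≤ √(∫ x, u x ^ 2 ∂μ) * √(∫ x, v x ^ 2 ∂μ) := by
  have := integral_mul_le_Lp_mul_Lq_of_nonneg .two_two hu hv (by simpa using hu2)
    (by simpa using hv2)
  simpa only [rpow_two, ← sqrt_eq_rpow] using this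

lemma setIntegral_norm_le_sqrt_mul_sqrt {α E : Type*} [MeasurableSpace α] {μ : Measure α}
    [NormedAddCommGroup E] {f : α → E} {w : α → ℝ} {s : Set α} (hw : ∀ x, 0 < w x)
    (hf : AEStronglyMeasurable f μ) (hwm : AEMeasurable w μ)
    (hw_inv : IntegrableOn (fun x => (w x ^ 2)⁻¹) s μ)
    (hwf : Integrable (fun x => w x ^ 2 * ‖f x‖ ^ 2) μ) :
    ∫ x in s, ‖f x‖ ∂μ ≤ √(∫ x in s, (w x ^ 2)⁻¹ ∂μ) * √(∫ x, w x ^ 2 * ‖f x‖ ^ 2 ∂μ) := by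
  have hu : MemLp (fun x => (w x)⁻¹) 2 (μ.restrict s) :=
    (memLp_two_iff_integrable_sq (f := fun x => (w x)⁻¹)
      hwm.inv.aestronglyMeasurable.restrict).2 <| by simp only [inv_pow]; exact hw_inv
  have hv : MemLp (fun x => w x * ‖f x‖) 2 (μ.restrict s) :=
    (memLp_two_iff_integrable_sq (f := fun x => w x * ‖f x‖)
      (hwm.aestronglyMeasurable.mul hf.norm).restrict).2 <| by
        simp only [mul_pow]; exact hwf.integrableOn
  have hcs := integral_mul_le_sqrt_mul_sqrt (ae_of_all _ fun x => (inv_pos.2 (hw x)).le)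
    (ae_of_all _ fun x => mul_nonneg (hw x).le (norm_nonneg (f x))) hu hv
  have hcancel : ∀ x, (w x)⁻¹ * (w x * ‖f x‖) = ‖f x‖ := fun x =>
    inv_mul_cancel_left₀ (hw x).ne' _
  simp only [hcancel, inv_pow, mul_pow] at hcs
  refine hcs.trans (mul_le_mul_of_nonneg_left (sqrt_le_sqrt ?_) (sqrt_nonneg _))
  exact setIntegral_le_integral hwf (ae_of_all _ fun x => by positivity)

lemma setIntegral_norm_ball_le {E : Type*} [NormedAddCommGroup E]
    {f : EuclideanSpace ℝ (Fin 2) → E} (hf : AEStronglyMeasurable f)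
    (hf2 : Integrable (fun ξ => ‖f ξ‖ ^ 2)) (x : EuclideanSpace ℝ (Fin 2)) {r : ℝ} (hr : 0 ≤ r) :
    ∫ ξ in ball x r, ‖f ξ‖ ≤ √π * r * √(∫ ξ, ‖f ξ‖ ^ 2) := by
  have hball : volume (ball x r) ≠ ⊤ := measure_ball_lt_top.ne
  have h := setIntegral_norm_le_sqrt_mul_sqrt (s := ball x r) (fun _ => one_pos) hf
    aemeasurable_const (by simpa using integrableOn_const (C := (1 : ℝ)) hball)
    (by simpa only [one_pow, one_mul] using hf2)
  simp only [one_pow, inv_one, one_mul, setIntegral_const, smul_eq_mul, mul_one] at h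
  rw [measureReal_def, EuclideanSpace.volume_ball_fin_two, ENNReal.toReal_mul,
    ENNReal.toReal_pow, ENNReal.toReal_ofReal hr, ENNReal.toReal_ofReal pi_nonneg,
    sqrt_mul (sq_nonneg r), sqrt_sq hr, mul_comm r] at h
  exact h

lemma integral_Ioi_mul_inv_one_add_sq_sq {R : ℝ} (hR : 0 ≤ R) :
    ∫ y in Ioi R, y * ((1 + y ^ 2) ^ 2)⁻¹ = (2 * (1 + R ^ 2))⁻¹ := by
  have hderiv : ∀ x ∈ Ici R, HasDerivAt (fun y : ℝ => -(2 * (1 + y ^ 2))⁻¹)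
      (x * ((1 + x ^ 2) ^ 2)⁻¹) x := by
    intro x _
    have h : HasDerivAt (fun y : ℝ => 2 * (1 + y ^ 2)) (2 * (2 * x)) x := by
      simpa using ((hasDerivAt_pow 2 x).const_add 1).const_mul 2
    refine (h.inv (by positivity)).neg.congr_deriv ?_
    field_simp
  have hlim : Tendsto (fun y : ℝ => -(2 * (1 + y ^ 2))⁻¹) atTop (nhds 0) := by
    have h : Tendsto (fun y : ℝ => 2 * (1 + y ^ 2)) atTop atTop :=
      (tendsto_atTop_add_const_left _ 1 (tendsto_pow_atTop two_ne_zero)).const_mul_atTop two_pos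
    simpa using h.inv_tendsto_atTop.neg
  have hpos : ∀ x ∈ Ioi R, 0 ≤ x * ((1 + x ^ 2) ^ 2)⁻¹ := fun x hx =>
    mul_nonneg (hR.trans hx.le) (by positivity)
  rw [integral_Ioi_of_hasDerivAt_of_nonneg' hderiv hpos hlim]
  ring

lemma integrable_inv_one_add_norm_sq_sq {E : Type*} [NormedAddCommGroup E] [NormedSpace ℝ E]
    [FiniteDimensional ℝ E] [MeasurableSpace E] [BorelSpace E] (μ : Measure E) [μ.IsAddHaarMeasure]
    (hE : Module.finrank ℝ E < 4) :
    Integrable (fun ξ : E => ((1 + ‖ξ‖ ^ 2) ^ 2)⁻¹) μ := by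
  have h := integrable_rpow_neg_one_add_norm_sq (μ := μ) (r := 4) (by exact_mod_cast hE)
  refine h.congr (ae_of_all _ fun ξ => ?_)
  dsimp only
  rw [show (-4 : ℝ) / 2 = -(2 : ℕ) by norm_num, rpow_neg (by positivity), rpow_natCast]

lemma setIntegral_compl_closedBall_inv_one_add_norm_sq_sq {R : ℝ} (hR : 0 ≤ R) :
    ∫ ξ in (closedBall (0 : EuclideanSpace ℝ (Fin 2)) R)ᶜ, ((1 + ‖ξ‖ ^ 2) ^ 2)⁻¹ =
      π / (1 + R ^ 2) := by
  have hind : ∫ ξ in (closedBall (0 : EuclideanSpace ℝ (Fin 2)) R)ᶜ, ((1 + ‖ξ‖ ^ 2) ^ 2)⁻¹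
      = ∫ ξ : EuclideanSpace ℝ (Fin 2), (Ioi R).indicator (fun y => ((1 + y ^ 2) ^ 2)⁻¹) ‖ξ‖ := by
    rw [← integral_indicator measurableSet_closedBall.compl]
    congr with ξ
    by_cases h : R < ‖ξ‖ <;> simp [indicator, h]
  have hradial :
      ∫ y in Ioi (0 : ℝ), y ^ (2 - 1) • (Ioi R).indicator (fun y => ((1 + y ^ 2) ^ 2)⁻¹) y
        = (2 * (1 + R ^ 2))⁻¹ := by
    simp_rw [Nat.add_one_sub_one, pow_one, smul_eq_mul]
    simp_rw [← indicator_mul_right (Ioi R) (fun y : ℝ => y)]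
    rw [integral_indicator measurableSet_Ioi, Measure.restrict_restrict measurableSet_Ioi,
      inter_eq_left.2 (Ioi_subset_Ioi hR), integral_Ioi_mul_inv_one_add_sq_sq hR]
  rw [hind, integral_fun_norm_addHaar, finrank_euclideanSpace_fin, hradial, measureReal_def,
    EuclideanSpace.volume_ball_fin_two]
  simp only [ENNReal.ofReal_one, one_pow, one_mul, ENNReal.toReal_ofReal pi_nonneg, smul_eq_mul,
    nsmul_eq_mul]
  field_simp
  ring

lemma setIntegral_norm_compl_closedBall_le {E : Type*} [NormedAddCommGroup E]
    {f : EuclideanSpace ℝ (Fin 2) → E} (hf : AEStronglyMeasurable f)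
    (hf2 : Integrable (fun ξ => (1 + ‖ξ‖ ^ 2) ^ 2 * ‖f ξ‖ ^ 2)) {R : ℝ} (hR : 0 < R) :
    ∫ ξ in (closedBall 0 R)ᶜ, ‖f ξ‖ ≤ √π * R⁻¹ * √(∫ ξ, (1 + ‖ξ‖ ^ 2) ^ 2 * ‖f ξ‖ ^ 2) := by
  refine (setIntegral_norm_le_sqrt_mul_sqrt (fun ξ => by positivity) hf (by fun_prop)
    (integrable_inv_one_add_norm_sq_sq volume (by simp)).integrableOn hf2).trans ?_
  rw [setIntegral_compl_closedBall_inv_one_add_norm_sq_sq hR.le]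
  gcongr
  calc √(π / (1 + R ^ 2)) ≤ √(π / R ^ 2) := by gcongr; linarith
    _ = √π * R⁻¹ := by rw [sqrt_div pi_nonneg, sqrt_sq hR.le, div_eq_mul_inv]

lemma norm_setIntegral_compl_annulus_le {E F : Type*} [NormedAddCommGroup E] [MeasurableSpace E]
    [OpensMeasurableSpace E] [NormedAddCommGroup F] [NormedSpace ℝ F] {μ : Measure E} {f : E → F}
    (hf : Integrable f μ) {a b : ℝ} (hab : a ≤ b) :
    ‖∫ ξ in {ξ | a ≤ ‖ξ‖ ∧ ‖ξ‖ ≤ b}ᶜ, f ξ ∂μ‖ ≤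
      (∫ ξ in ball 0 a, ‖f ξ‖ ∂μ) + ∫ ξ in (closedBall 0 b)ᶜ, ‖f ξ‖ ∂μ := by
  have hcompl : {ξ : E | a ≤ ‖ξ‖ ∧ ‖ξ‖ ≤ b}ᶜ = ball 0 a ∪ (closedBall 0 b)ᶜ := by
    ext ξ
    simp [-not_and, not_and_or]
  have hdisj : Disjoint (ball (0 : E) a) (closedBall 0 b)ᶜ :=
    disjoint_compl_right_iff_subset.2 <|
      ball_subset_closedBall.trans (closedBall_subset_closedBall hab)
  rw [hcompl, ← setIntegral_union hdisj measurableSet_closedBall.compl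
    hf.norm.integrableOn hf.norm.integrableOn]
  exact norm_integral_le_integral_norm _

theorem truncation_error_2D_general (qhat : EuclideanSpace ℝ (Fin 2) → ℂ)
    (hint : Integrable qhat)
    (hH2 : Integrable (fun ξ : EuclideanSpace ℝ (Fin 2) => (1 + ‖ξ‖ ^ 2) ^ 2 * ‖qhat ξ‖ ^ 2))
    (z : EuclideanSpace ℝ (Fin 2)) (kmin kmax : ℝ) (hkmin : 0 < kmin) (hk : kmin ≤ kmax) :
    ‖((2 * Real.pi : ℂ) ^ 2)⁻¹ *
        (∫ ξ, qhat ξ * Complex.exp (Complex.I * ((inner ℝ z ξ : ℝ) : ℂ))) -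
      ((2 * Real.pi : ℂ) ^ 2)⁻¹ *
        (∫ ξ in {ξ : EuclideanSpace ℝ (Fin 2) | kmin ≤ ‖ξ‖ ∧ ‖ξ‖ ≤ kmax},
          qhat ξ * Complex.exp (Complex.I * ((inner ℝ z ξ : ℝ) : ℂ)))‖ ≤
      Real.sqrt Real.pi *
        (kmax⁻¹ * (((2 * Real.pi) ^ 2)⁻¹ *
            Real.sqrt (∫ ξ, (1 + ‖ξ‖ ^ 2) ^ 2 * ‖qhat ξ‖ ^ 2)) +
          kmin * (((2 * Real.pi) ^ 2)⁻¹ * Real.sqrt (∫ ξ, ‖qhat ξ‖ ^ 2))) := by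
  set φ := fun ξ => qhat ξ * Complex.exp (Complex.I * ((inner ℝ z ξ : ℝ) : ℂ))
  have hφ : ∀ ξ, ‖φ ξ‖ = ‖qhat ξ‖ := fun ξ => by
    simp [φ, mul_comm Complex.I, Complex.norm_exp_ofReal_mul_I]
  have hφint : Integrable φ :=
    hint.congr' (hint.aestronglyMeasurable.mul (by fun_prop)) (ae_of_all _ fun ξ => (hφ ξ).symm)
  have hL2 : Integrable (fun ξ => ‖qhat ξ‖ ^ 2) :=
    hH2.mono' (hint.aestronglyMeasurable.norm.pow 2) (ae_of_all _ fun ξ => by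
      rw [norm_pow, norm_norm]
      exact le_mul_of_one_le_left (by positivity) (one_le_pow₀ (by simp)))
  have hS : MeasurableSet {ξ : EuclideanSpace ℝ (Fin 2) | kmin ≤ ‖ξ‖ ∧ ‖ξ‖ ≤ kmax} :=
    (measurableSet_le measurable_const measurable_norm).inter
      (measurableSet_le measurable_norm measurable_const)
  have hconst : ‖((2 * π : ℂ) ^ 2)⁻¹‖ = ((2 * π) ^ 2)⁻¹ := by
    simp [abs_of_pos pi_pos]
  rw [← mul_sub, ← setIntegral_compl hS hφint, norm_mul, hconst]
  calc _ ≤ ((2 * π) ^ 2)⁻¹ *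
        ((∫ ξ in ball 0 kmin, ‖φ ξ‖) + ∫ ξ in (closedBall 0 kmax)ᶜ, ‖φ ξ‖) := by
        gcongr
        exact norm_setIntegral_compl_annulus_le hφint hk
    _ ≤ ((2 * π) ^ 2)⁻¹ * (√π * kmin * √(∫ ξ, ‖qhat ξ‖ ^ 2) +
          √π * kmax⁻¹ * √(∫ ξ, (1 + ‖ξ‖ ^ 2) ^ 2 * ‖qhat ξ‖ ^ 2)) := by
        simp_rw [hφ]
        gcongr
        · exact setIntegral_norm_ball_le hint.aestronglyMeasurable hL2 0 hkmin.le
        · exact setIntegral_norm_compl_closedBall_le hint.aestronglyMeasurable hH2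
            (hkmin.trans_le hk)
    _ = _ := by ring

/-- Two-dimensional wavenumber-truncation error estimate: truncating the
Fourier integral `(2π)^{-2} ∫ q̂(ξ) e^{i⟨z,ξ⟩} dξ` to the annulus `kmin ≤ ‖ξ‖ ≤ kmax`
produces an error at most `√π (kmax⁻¹ ‖q‖_{H²} + kmin ‖q‖_{L²})`. -/
theorem truncation_error_2D (qhat : EuclideanSpace ℝ (Fin 2) → ℂ)
    (hmeas : Measurable qhat) (hint : Integrable qhat)
    (hH2 : Integrable (fun ξ : EuclideanSpace ℝ (Fin 2) => (1 + ‖ξ‖ ^ 2) ^ 2 * ‖qhat ξ‖ ^ 2))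
    (z : EuclideanSpace ℝ (Fin 2)) (kmin kmax : ℝ) (hkmin : 0 < kmin) (hk : kmin ≤ kmax) :
    ‖((2 * Real.pi : ℂ) ^ 2)⁻¹ *
        (∫ ξ, qhat ξ * Complex.exp (Complex.I * ((inner ℝ z ξ : ℝ) : ℂ))) -
      ((2 * Real.pi : ℂ) ^ 2)⁻¹ *
        (∫ ξ in {ξ : EuclideanSpace ℝ (Fin 2) | kmin ≤ ‖ξ‖ ∧ ‖ξ‖ ≤ kmax},
          qhat ξ * Complex.exp (Complex.I * ((inner ℝ z ξ : ℝ) : ℂ)))‖ ≤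
      Real.sqrt Real.pi *
        (kmax⁻¹ * (((2 * Real.pi) ^ 2)⁻¹ *
            Real.sqrt (∫ ξ, (1 + ‖ξ‖ ^ 2) ^ 2 * ‖qhat ξ‖ ^ 2)) +
          kmin * (((2 * Real.pi) ^ 2)⁻¹ * Real.sqrt (∫ ξ, ‖qhat ξ‖ ^ 2))) :=
  truncation_error_2D_general qhat hint hH2 z kmin kmax hkmin hk
end

section
/- Let n ≥ 1, R > 0, M ≥ 0, and let θ ∈ ℝ^n with ‖θ‖ = 1. Let E = C(closure(B_R), ℂ) with the supremum norm, let T : E → E be a continuous linear operator with ‖T‖ ≤ M, and let k > 0 satisfy k^2 M ≤ 1/2. Suppose u ∈ E satisfies the fixed-point equation u = v + k^2 (T u), where v ∈ E is given by v(x) = e^{ik⟨θ,x⟩}. Then for every x in the closed ball of radius R, | u(x) − (1 + i k ⟨θ,x⟩) | ≤ (R^2/2 + 2M) k^2. In particular, u(x) = 1 + ik θ·x + O(k^2) uniformly on closure(B_R) as k → 0. -/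
open MeasureTheory

instance closedBall_compactSpace (n : ℕ) (R : ℝ) :
    CompactSpace (Metric.closedBall (0 : EuclideanSpace ℝ (Fin n)) R) :=
  isCompact_iff_compactSpace.mp (isCompact_closedBall _ _)

/-!
The incident wave `v` differs from `1 + ik⟨θ,x⟩` by its second-order Taylor remainder,
at most `(k⟨θ,x⟩)² / 2 ≤ k²R² / 2`. The scattered part `k² T u` is controlled by the a priori
bound `‖u‖ ≤ 2‖v‖ = 2`, which follows from `k² ‖T‖ ≤ 1/2` by absorbing `k² T u` into the
left-hand side; it therefore contributes at most `2Mk²`.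
-/

open Complex ComplexConjugate

theorem hasDerivAt_exp_I_mul_sub_one_sub (s : ℝ) :
    HasDerivAt (fun s : ℝ => exp (I * s) - 1 - I * s) (I * (exp (I * s) - 1)) s := by
  have hIs : HasDerivAt (fun s : ℝ => I * (s : ℂ)) I s := by
    simpa using (ofRealCLM.hasDerivAt (x := s)).const_mul I
  exact ((hIs.cexp.sub_const 1).sub hIs).congr_deriv (by ring)

theorem norm_exp_I_mul_sub_one_sub_le_of_nonneg {t : ℝ} (ht : 0 ≤ t) :
    ‖exp (I * t) - 1 - I * t‖ ≤ t ^ 2 / 2 := by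
  refine image_norm_le_of_norm_deriv_right_le_deriv_boundary (a := 0) (b := t)
    (B := fun s => s ^ 2 / 2) (B' := id) ?_
    (fun s _ => (hasDerivAt_exp_I_mul_sub_one_sub s).hasDerivWithinAt) (by simp) ?_ ?_
    ⟨ht, le_rfl⟩
  · exact fun s _ => (hasDerivAt_exp_I_mul_sub_one_sub s).continuousAt.continuousWithinAt
  · intro s
    simpa using ((hasDerivAt_pow 2 s).div_const 2)
  · rintro s ⟨hs, -⟩
    rw [norm_mul, norm_I, one_mul]
    simpa [abs_of_nonneg hs] using Real.norm_exp_I_mul_ofReal_sub_one_le (x := s)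

theorem norm_exp_I_mul_sub_one_sub_le (t : ℝ) :
    ‖exp (I * t) - 1 - I * t‖ ≤ t ^ 2 / 2 := by
  rcases le_total 0 t with ht | ht
  · exact norm_exp_I_mul_sub_one_sub_le_of_nonneg ht
  · have hconj : exp (I * t) - 1 - I * t =
        conj (exp (I * ((-t : ℝ) : ℂ)) - 1 - I * ((-t : ℝ) : ℂ)) := by
      simp [← exp_conj, sub_eq_add_neg]
    rw [hconj, RCLike.norm_conj, ← neg_sq]
    exact norm_exp_I_mul_sub_one_sub_le_of_nonneg (neg_nonneg.2 ht)

theorem norm_le_two_mul_of_eq_add_smul {𝕜 E : Type*} [NontriviallyNormedField 𝕜]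
    [SeminormedAddCommGroup E] [NormedSpace 𝕜 E] {T : E →L[𝕜] E} {c : 𝕜} {u v : E}
    (hcT : ‖c‖ * ‖T‖ ≤ 1 / 2) (hu : u = v + c • T u) : ‖u‖ ≤ 2 * ‖v‖ := by
  have hu_le : ‖u‖ ≤ ‖v‖ + 1 / 2 * ‖u‖ :=
    calc ‖u‖ = ‖v + c • T u‖ := congrArg _ hu
      _ ≤ ‖v‖ + ‖c • T u‖ := norm_add_le _ _
      _ ≤ ‖v‖ + ‖c‖ * ‖T‖ * ‖u‖ := by
        rw [norm_smul, mul_assoc]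
        gcongr
        exact T.le_opNorm u
      _ ≤ ‖v‖ + 1 / 2 * ‖u‖ := by gcongr
  linarith

theorem abs_real_inner_le_of_mem_closedBall {F : Type*} [NormedAddCommGroup F]
    [InnerProductSpace ℝ F] {θ x : F} {R : ℝ} (hθ : ‖θ‖ ≤ 1) (hx : x ∈ Metric.closedBall 0 R) :
    |inner ℝ θ x| ≤ R :=
  (abs_real_inner_le_norm θ x).trans <|
    (mul_le_of_le_one_left (norm_nonneg x) hθ).trans (mem_closedBall_zero_iff.1 hx)

theorem total_field_low_wavenumber_general (n : ℕ) (R : ℝ)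
    (M : ℝ) (θ : EuclideanSpace ℝ (Fin n)) (hθ : ‖θ‖ = 1)
    (T : C(Metric.closedBall (0 : EuclideanSpace ℝ (Fin n)) R, ℂ) →L[ℂ]
         C(Metric.closedBall (0 : EuclideanSpace ℝ (Fin n)) R, ℂ))
    (hT : ‖T‖ ≤ M) (k : ℝ) (hkM : k ^ 2 * M ≤ 1 / 2)
    (v u : C(Metric.closedBall (0 : EuclideanSpace ℝ (Fin n)) R, ℂ))
    (hv : ∀ x, v x = Complex.exp (Complex.I * (k : ℂ) *
      ((inner ℝ θ (x : EuclideanSpace ℝ (Fin n)) : ℝ) : ℂ)))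
    (hu : u = v + ((k : ℂ) ^ 2) • T u) :
    ∀ x, ‖u x - (1 + Complex.I * (k : ℂ) *
        ((inner ℝ θ (x : EuclideanSpace ℝ (Fin n)) : ℝ) : ℂ))‖ ≤
      (R ^ 2 / 2 + 2 * M) * k ^ 2 := by
  have hk2 : ‖(k : ℂ) ^ 2‖ = k ^ 2 := by simp
  have hv' : ∀ x, v x = exp (I * ((k * inner ℝ θ (x : EuclideanSpace ℝ (Fin n)) : ℝ) : ℂ)) :=
    fun x => by rw [hv, ofReal_mul, mul_assoc]
  have hv_norm : ‖v‖ ≤ 1 :=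
    (ContinuousMap.norm_le _ zero_le_one).2 fun x => by rw [hv', norm_exp_I_mul_ofReal]
  have hu_norm : ‖u‖ ≤ 2 := by
    have hcT : ‖(k : ℂ) ^ 2‖ * ‖T‖ ≤ 1 / 2 :=
      hk2 ▸ (mul_le_mul_of_nonneg_left hT (sq_nonneg k)).trans hkM
    linarith [norm_le_two_mul_of_eq_add_smul hcT hu]
  have hTu : ∀ x, ‖T u x‖ ≤ M * 2 := fun x =>
    ((T u).norm_coe_le_norm x).trans <| (T.le_opNorm u).trans <|
      mul_le_mul hT hu_norm (norm_nonneg u) ((norm_nonneg T).trans hT)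
  intro x
  set s := k * inner ℝ θ (x : EuclideanSpace ℝ (Fin n))
  have hs : s ^ 2 ≤ k ^ 2 * R ^ 2 := by
    rw [mul_pow, ← sq_abs (inner ℝ θ _)]
    gcongr
    exact abs_real_inner_le_of_mem_closedBall hθ.le x.2
  have hux : u x = v x + (k : ℂ) ^ 2 * T u x := by simpa using DFunLike.congr_fun hu x
  calc ‖u x - (1 + I * k * ((inner ℝ θ (x : EuclideanSpace ℝ (Fin n)) : ℝ) : ℂ))‖
      = ‖(exp (I * s) - 1 - I * s) + (k : ℂ) ^ 2 * T u x‖ := by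
        rw [hux, hv']; push_cast [s]; ring_nf
    _ ≤ s ^ 2 / 2 + k ^ 2 * (M * 2) := norm_add_le_of_le (norm_exp_I_mul_sub_one_sub_le s)
        (by rw [norm_mul, hk2]; gcongr; exact hTu x)
    _ ≤ (R ^ 2 / 2 + 2 * M) * k ^ 2 := by linarith

/-- Low-wavenumber asymptotics of the total field: if `u` solves the
Lippmann–Schwinger fixed-point equation `u = v + k² T u` with incident plane wave
`v(x) = e^{ik⟨θ,x⟩}`, `‖T‖ ≤ M` and `k² M ≤ 1/2`, then
`|u(x) - (1 + ik θ·x)| ≤ (R²/2 + 2M) k²` on the closed ball of radius `R`. -/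
theorem total_field_low_wavenumber (n : ℕ) (hn : 1 ≤ n) (R : ℝ) (hR : 0 < R)
    (M : ℝ) (hM : 0 ≤ M) (θ : EuclideanSpace ℝ (Fin n)) (hθ : ‖θ‖ = 1)
    (T : C(Metric.closedBall (0 : EuclideanSpace ℝ (Fin n)) R, ℂ) →L[ℂ]
         C(Metric.closedBall (0 : EuclideanSpace ℝ (Fin n)) R, ℂ))
    (hT : ‖T‖ ≤ M) (k : ℝ) (hk : 0 < k) (hkM : k ^ 2 * M ≤ 1 / 2)
    (v u : C(Metric.closedBall (0 : EuclideanSpace ℝ (Fin n)) R, ℂ))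
    (hv : ∀ x, v x = Complex.exp (Complex.I * (k : ℂ) *
      ((inner ℝ θ (x : EuclideanSpace ℝ (Fin n)) : ℝ) : ℂ)))
    (hu : u = v + ((k : ℂ) ^ 2) • T u) :
    ∀ x, ‖u x - (1 + Complex.I * (k : ℂ) *
        ((inner ℝ θ (x : EuclideanSpace ℝ (Fin n)) : ℝ) : ℂ))‖ ≤
      (R ^ 2 / 2 + 2 * M) * k ^ 2 :=
  total_field_low_wavenumber_general n R M θ hθ T hT k hkM v u hv hu
end
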